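/- arXiv:1911.09721 — 3 statements merged into one kernel-verified Lean document; each statement's English description precedes it below -/
import Mathlib

section
/- Aggregate bound for the restricted-adversary robust compressed gradient: Let M, B partition [m] with |B| = alpha*m, U, T partition [m] with |T| = beta*m, alpha <= beta < 1/2. Let Q be a delta-approximate compressor. Suppose ||F_i - G|| <= eps1 for all i in M, ||(1/|M|) sum_{i in M} F_i - G|| <= eps2, and every i in B intersect U satisfies ||F_i|| <= max_{j in M} ||F_j||, and T contains at least one element of M maximizing over trims (so B-in-U norms are bounded by good-machine norms). Then || (1/|U|) sum_{i in U} Q(F_i) - G || <= ((sqrt(1-delta) + 2 alpha)/(1-beta)) ||G|| + ((sqrt(1-delta) + alpha + beta)/(1-beta)) eps1 + ((1-alpha)/(1-beta)) eps2. -/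
/-!
Write the aggregate error as `(1/|U|) ∑_{i ∈ U} (Q(F i) - G)`. The compression error contributes
at most `√(1-δ) ‖F i‖ ≤ √(1-δ) (‖G‖ + ε₁)` per machine, because the trimming rule keeps every
untrimmed Byzantine norm below the largest good norm. The remaining sum `∑_{i ∈ U} (F i - G)`
differs from `∑_{i ∈ M} (F i - G) = |M| (mean_M F - G)` by the good machines that were trimmed
(at most `β m` of them, each off by `ε₁`) and the Byzantine machines that were kept (at most `α m`,
each off by at most `2‖G‖ + ε₁`).
-/

open Finset

lemma cast_card_eq_one_sub_mul {ι : Type*} [Fintype ι] [DecidableEq ι] {s t : Finset ι} {a : ℝ}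
    (hd : Disjoint s t) (hu : s ∪ t = univ) (ht : (#t : ℝ) = a * Fintype.card ι) :
    (#s : ℝ) = (1 - a) * Fintype.card ι := by
  have : (#s : ℝ) + #t = Fintype.card ι := by
    rw [← Nat.cast_add, ← card_union_of_disjoint hd, hu, card_univ]
  linarith

lemma sum_eq_sum_sub_sum_sdiff_add_sum_sdiff {ι E : Type*} [AddCommGroup E] [DecidableEq ι]
    (M U : Finset ι) (g : ι → E) :
    ∑ i ∈ U, g i = ∑ i ∈ M, g i - ∑ i ∈ M \ U, g i + ∑ i ∈ U \ M, g i := by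
  linear_combination (norm := abel) -(sum_sdiff_sub_sum_sdiff (s₁ := M) (s₂ := U) (f := g))

section

variable {ι E : Type*} [SeminormedAddCommGroup E]

lemma norm_sum_le_card_mul (s : Finset ι) (f : ι → E) {c : ℝ} (h : ∀ i ∈ s, ‖f i‖ ≤ c) :
    ‖∑ i ∈ s, f i‖ ≤ #s * c :=
  (norm_sum_le_of_le s h).trans_eq (by rw [sum_const, nsmul_eq_mul])

lemma sum_sub_eq_card_smul_mean_sub [NormedSpace ℝ E] {s : Finset ι} (hs : s.Nonempty)
    (f : ι → E) (g : E) :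
    ∑ i ∈ s, (f i - g) = (#s : ℝ) • ((1 / (#s : ℝ)) • ∑ i ∈ s, f i - g) := by
  have hcard : (#s : ℝ) ≠ 0 := by exact_mod_cast hs.card_pos.ne'
  rw [sum_sub_distrib, sum_const, smul_sub, smul_smul, mul_one_div_cancel hcard, one_smul,
    Nat.cast_smul_eq_nsmul]

lemma norm_mean_sub_eq [NormedSpace ℝ E] {s : Finset ι} (hs : s.Nonempty) (f : ι → E) (g : E) :
    ‖(1 / (#s : ℝ)) • ∑ i ∈ s, f i - g‖ = ‖∑ i ∈ s, (f i - g)‖ / #s := by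
  have hcard : (0 : ℝ) < #s := by exact_mod_cast hs.card_pos
  rw [sum_sub_eq_card_smul_mean_sub hs, norm_smul, Real.norm_of_nonneg hcard.le,
    mul_div_cancel_left₀ _ hcard.ne']

theorem norm_sum_compressed_sub_le [DecidableEq ι] (Q : E → E) {S : ℝ} (hS : 0 ≤ S)
    (hQ : ∀ x, ‖Q x - x‖ ≤ S * ‖x‖) (F : ι → E) (G : E) (M U : Finset ι) {ε : ℝ}
    (hM : ∀ i ∈ M, ‖F i - G‖ ≤ ε) (hUM : ∀ i ∈ U \ M, ‖F i‖ ≤ ‖G‖ + ε) :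
    ‖∑ i ∈ U, (Q (F i) - G)‖ ≤
      #U * (S * (‖G‖ + ε)) + ‖∑ i ∈ M, (F i - G)‖ + #(M \ U) * ε
        + #(U \ M) * (2 * ‖G‖ + ε) := by
  have hF : ∀ i ∈ U, ‖F i‖ ≤ ‖G‖ + ε := by
    intro i hi
    by_cases hiM : i ∈ M
    · linarith [norm_le_norm_add_norm_sub' (F i) G, hM i hiM]
    · exact hUM i (mem_sdiff.2 ⟨hi, hiM⟩)
  have hcompress : ‖∑ i ∈ U, (Q (F i) - F i)‖ ≤ #U * (S * (‖G‖ + ε)) :=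
    norm_sum_le_card_mul U _ fun i hi =>
      (hQ (F i)).trans (mul_le_mul_of_nonneg_left (hF i hi) hS)
  have htrimmed : ‖∑ i ∈ M \ U, (F i - G)‖ ≤ #(M \ U) * ε :=
    norm_sum_le_card_mul _ _ fun i hi => hM i (mem_sdiff.1 hi).1
  have hkept : ‖∑ i ∈ U \ M, (F i - G)‖ ≤ #(U \ M) * (2 * ‖G‖ + ε) :=
    norm_sum_le_card_mul _ _ fun i hi => (norm_sub_le _ _).trans (by linarith [hUM i hi])
  have hsplit : ∑ i ∈ U, (Q (F i) - G) = ∑ i ∈ U, (Q (F i) - F i)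
      + (∑ i ∈ M, (F i - G) - ∑ i ∈ M \ U, (F i - G) + ∑ i ∈ U \ M, (F i - G)) := by
    rw [← sum_eq_sum_sub_sum_sdiff_add_sum_sdiff, ← sum_add_distrib]
    simp only [sub_add_sub_cancel]
  rw [hsplit]
  grw [norm_add_le, norm_add_le, norm_sub_le, hcompress, htrimmed, hkept]
  linarith

end

theorem stmt_12_general (d m : ℕ) (α β δ ε1 ε2 : ℝ)
    (hε1 : 0 ≤ ε1)
    (M B U T : Finset (Fin m))
    (hMB : Disjoint M B) (hMBu : M ∪ B = Finset.univ)
    (hUT : Disjoint U T) (hUTu : U ∪ T = Finset.univ)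
    (hBcard : (B.card : ℝ) = α * m) (hTcard : (T.card : ℝ) = β * m)
    (hMne : M.Nonempty) (hUne : U.Nonempty)
    (Q : EuclideanSpace ℝ (Fin d) → EuclideanSpace ℝ (Fin d))
    (hQ : ∀ x, ‖Q x - x‖ ≤ Real.sqrt (1 - δ) * ‖x‖)
    (F : Fin m → EuclideanSpace ℝ (Fin d)) (G : EuclideanSpace ℝ (Fin d))
    (h1 : ∀ i ∈ M, ‖F i - G‖ ≤ ε1)
    (h2 : ‖(1 / (M.card : ℝ)) • ∑ i ∈ M, F i - G‖ ≤ ε2)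
    (h3 : ∀ i ∈ B ∩ U, ‖F i‖ ≤ M.sup' hMne fun j => ‖F j‖) :
    ‖(1 / (U.card : ℝ)) • ∑ i ∈ U, Q (F i) - G‖ ≤
      ((Real.sqrt (1 - δ) + 2 * α) / (1 - β)) * ‖G‖ +
        ((Real.sqrt (1 - δ) + α + β) / (1 - β)) * ε1 +
        ((1 - α) / (1 - β)) * ε2 := by
  have hUpos : (0 : ℝ) < #U := by exact_mod_cast hUne.card_pos
  have hUle : (#U : ℝ) ≤ m := by exact_mod_cast (card_le_univ U).trans_eq (Fintype.card_fin m)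
  have hcardU : (#U : ℝ) = (1 - β) * m := by
    simpa using cast_card_eq_one_sub_mul hUT hUTu (by simpa using hTcard)
  have hcardM : (#M : ℝ) = (1 - α) * m := by
    simpa using cast_card_eq_one_sub_mul hMB hMBu (by simpa using hBcard)
  have hMU : M \ U ⊆ T := sdiff_le_iff.2 (by rw [sup_eq_union, hUTu]; exact subset_univ M)
  have hUM : U \ M ⊆ B := sdiff_le_iff.2 (by rw [sup_eq_union, hMBu]; exact subset_univ U)
  have hMUcard : (#(M \ U) : ℝ) ≤ β * m := hTcard ▸ (by exact_mod_cast card_le_card hMU)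
  have hUMcard : (#(U \ M) : ℝ) ≤ α * m := hBcard ▸ (by exact_mod_cast card_le_card hUM)
  have hkept : ∀ i ∈ U \ M, ‖F i‖ ≤ ‖G‖ + ε1 := fun i hi =>
    (h3 i (mem_inter.2 ⟨hUM hi, (mem_sdiff.1 hi).1⟩)).trans <| sup'_le hMne _ fun j hj =>
      by linarith [norm_le_norm_add_norm_sub' (F j) G, h1 j hj]
  have hgood : ‖∑ i ∈ M, (F i - G)‖ ≤ (1 - α) * m * ε2 := by
    rw [sum_sub_eq_card_smul_mean_sub hMne, norm_smul, Real.norm_natCast, ← hcardM]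
    exact mul_le_mul_of_nonneg_left h2 (Nat.cast_nonneg _)
  have h1β : 1 - β ≠ 0 := left_ne_zero_of_mul (hcardU ▸ hUpos.ne')
  rw [norm_mean_sub_eq hUne, div_le_iff₀ hUpos]
  calc ‖∑ i ∈ U, (Q (F i) - G)‖
      ≤ #U * (√(1 - δ) * (‖G‖ + ε1)) + (1 - α) * m * ε2 + β * m * ε1
          + α * m * (2 * ‖G‖ + ε1) := by
        have := norm_sum_compressed_sub_le Q (Real.sqrt_nonneg _) hQ F G M U h1 hkept
        have := mul_le_mul_of_nonneg_right hMUcard hε1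
        have := mul_le_mul_of_nonneg_right hUMcard (by positivity : 0 ≤ 2 * ‖G‖ + ε1)
        linarith
    _ ≤ m * (√(1 - δ) * (‖G‖ + ε1)) + (1 - α) * m * ε2 + β * m * ε1
          + α * m * (2 * ‖G‖ + ε1) := by gcongr
    _ = _ := by rw [hcardU]; field_simp; ring

/-- Aggregate bound for the restricted-adversary robust compressed gradient (Lemma 1). -/
theorem stmt_12 (d m : ℕ) (hm : 0 < m) (α β δ ε1 ε2 : ℝ)
    (hα : 0 ≤ α) (hαβ : α ≤ β) (hβ : β < 1 / 2) (hδ : δ ∈ Set.Ioc (0 : ℝ) 1)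
    (hε1 : 0 ≤ ε1) (hε2 : 0 ≤ ε2)
    (M B U T : Finset (Fin m))
    (hMB : Disjoint M B) (hMBu : M ∪ B = Finset.univ)
    (hUT : Disjoint U T) (hUTu : U ∪ T = Finset.univ)
    (hBcard : (B.card : ℝ) = α * m) (hTcard : (T.card : ℝ) = β * m)
    (hMne : M.Nonempty) (hUne : U.Nonempty)
    (Q : EuclideanSpace ℝ (Fin d) → EuclideanSpace ℝ (Fin d))
    (hQ : ∀ x, ‖Q x - x‖ ≤ Real.sqrt (1 - δ) * ‖x‖)
    (F : Fin m → EuclideanSpace ℝ (Fin d)) (G : EuclideanSpace ℝ (Fin d))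
    (h1 : ∀ i ∈ M, ‖F i - G‖ ≤ ε1)
    (h2 : ‖(1 / (M.card : ℝ)) • ∑ i ∈ M, F i - G‖ ≤ ε2)
    (h3 : ∀ i ∈ B ∩ U, ‖F i‖ ≤ M.sup' hMne fun j => ‖F j‖) :
    ‖(1 / (U.card : ℝ)) • ∑ i ∈ U, Q (F i) - G‖ ≤
      ((Real.sqrt (1 - δ) + 2 * α) / (1 - β)) * ‖G‖ +
        ((Real.sqrt (1 - δ) + α + β) / (1 - β)) * ε1 +
        ((1 - α) / (1 - β)) * ε2 :=
  stmt_12_general d m α β δ ε1 ε2 hε1 M B U T hMB hMBu hUT hUTu hBcard hTcard hMne hUne Q hQ F G h1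
    h2 h3
end

section
/- Aggregate bound for the arbitrary-adversary setting: Under the same partition setup (|B| = alpha m Byzantine, |T| = beta m trimmed, alpha <= beta < 1/2), suppose ||F_i - G|| <= eps1 for all good i in M, ||(1/|M|) sum_{i in M} F_i - G|| <= eps2, Q is a delta-approximate compressor applied by good machines, Byzantine machines in U send arbitrary vectors v_i, and sorting is by norm of received compressed vectors so that ||v_i|| <= max_{j in M} ||Q(F_j)|| for all i in B intersect U. Then || (1/|U|) sum_{i in U} (received vector)_i - G || <= (((1+beta) sqrt(1-delta) + 2 alpha)/(1-beta)) ||G|| + (((1+beta) sqrt(1-delta) + alpha + beta)/(1-beta)) eps1 + ((1-alpha)/(1-beta)) eps2. -/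
open Finset

private lemma sum_norm_le_card_mul {ι E : Type*} [NormedAddCommGroup E]
    (s : Finset ι) (f : ι → E) (C : ℝ) (h : ∀ i ∈ s, ‖f i‖ ≤ C) :
    ‖∑ i ∈ s, f i‖ ≤ (s.card : ℝ) * C := by
  calc ‖∑ i ∈ s, f i‖ ≤ ∑ i ∈ s, ‖f i‖ := norm_sum_le _ _
    _ ≤ s.card • C := Finset.sum_le_card_nsmul s _ C h
    _ = (s.card : ℝ) * C := by rw [nsmul_eq_mul]

set_option maxHeartbeats 1000000 in
/-- Aggregate bound for the arbitrary-adversary setting (Lemma 2). -/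
theorem stmt_13 (d m : ℕ) (hm : 0 < m) (α β δ ε1 ε2 : ℝ)
    (hα : 0 ≤ α) (hαβ : α ≤ β) (hβ : β < 1 / 2) (hδ : δ ∈ Set.Ioc (0 : ℝ) 1)
    (hε1 : 0 ≤ ε1) (hε2 : 0 ≤ ε2)
    (M B U T : Finset (Fin m))
    (hMB : Disjoint M B) (hMBu : M ∪ B = Finset.univ)
    (hUT : Disjoint U T) (hUTu : U ∪ T = Finset.univ)
    (hBcard : (B.card : ℝ) = α * m) (hTcard : (T.card : ℝ) = β * m)
    (hMne : M.Nonempty) (hUne : U.Nonempty)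
    (Q : EuclideanSpace ℝ (Fin d) → EuclideanSpace ℝ (Fin d))
    (hQ : ∀ x, ‖Q x - x‖ ≤ Real.sqrt (1 - δ) * ‖x‖)
    (F : Fin m → EuclideanSpace ℝ (Fin d)) (G : EuclideanSpace ℝ (Fin d))
    (r : Fin m → EuclideanSpace ℝ (Fin d))
    (hr : ∀ i ∈ M, r i = Q (F i))
    (h1 : ∀ i ∈ M, ‖F i - G‖ ≤ ε1)
    (h2 : ‖(1 / (M.card : ℝ)) • ∑ i ∈ M, F i - G‖ ≤ ε2)
    (h3 : ∀ i ∈ B ∩ U, ‖r i‖ ≤ M.sup' hMne fun j => ‖Q (F j)‖) :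
    ‖(1 / (U.card : ℝ)) • ∑ i ∈ U, r i - G‖ ≤
      (((1 + β) * Real.sqrt (1 - δ) + 2 * α) / (1 - β)) * ‖G‖ +
        (((1 + β) * Real.sqrt (1 - δ) + α + β) / (1 - β)) * ε1 +
        ((1 - α) / (1 - β)) * ε2 := by
  set s := Real.sqrt (1 - δ) with hsdef
  have hs0 : 0 ≤ s := Real.sqrt_nonneg _
  have hβ0 : 0 ≤ β := le_trans hα hαβ
  have hm' : (0 : ℝ) < m := by exact_mod_cast hm
  have h1β : (0 : ℝ) < 1 - β := by linarith
  -- cardinalities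
  have hMBcard : (M.card : ℝ) + B.card = m := by
    have h := Finset.card_union_of_disjoint hMB
    rw [hMBu, Finset.card_univ, Fintype.card_fin] at h
    exact_mod_cast h.symm
  have hUTcard : (U.card : ℝ) + T.card = m := by
    have h := Finset.card_union_of_disjoint hUT
    rw [hUTu, Finset.card_univ, Fintype.card_fin] at h
    exact_mod_cast h.symm
  have hMcard : (M.card : ℝ) = (1 - α) * m := by rw [hBcard] at hMBcard; linarith
  have hUcard : (U.card : ℝ) = (1 - β) * m := by rw [hTcard] at hUTcard; linarith
  have hUpos : (0 : ℝ) < U.card := by rw [hUcard]; positivity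
  have hMpos : (0 : ℝ) < M.card := by exact_mod_cast Finset.card_pos.mpr hMne
  -- set splittings
  have hUsplit : (M ∩ U) ∪ (B ∩ U) = U := by
    rw [← Finset.union_inter_distrib_right, hMBu, Finset.univ_inter]
  have hMsplit : (M ∩ U) ∪ (M ∩ T) = M := by
    rw [← Finset.inter_union_distrib_left, hUTu, Finset.inter_univ]
  have hdisjU : Disjoint (M ∩ U) (B ∩ U) :=
    hMB.mono Finset.inter_subset_left Finset.inter_subset_left
  have hdisjM : Disjoint (M ∩ U) (M ∩ T) :=
    hUT.mono Finset.inter_subset_right Finset.inter_subset_right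
  have hcU : (U.card : ℝ) = ((M ∩ U).card : ℝ) + ((B ∩ U).card : ℝ) := by
    conv_lhs => rw [← hUsplit]
    rw [Finset.card_union_of_disjoint hdisjU]; push_cast; ring
  have hcM : (M.card : ℝ) = ((M ∩ U).card : ℝ) + ((M ∩ T).card : ℝ) := by
    conv_lhs => rw [← hMsplit]
    rw [Finset.card_union_of_disjoint hdisjM]; push_cast; ring
  have hBUle : ((B ∩ U).card : ℝ) ≤ α * m := by
    rw [← hBcard]; exact_mod_cast Finset.card_le_card Finset.inter_subset_left
  have hMTle : ((M ∩ T).card : ℝ) ≤ β * m := by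
    rw [← hTcard]; exact_mod_cast Finset.card_le_card Finset.inter_subset_right
  -- pointwise bounds
  have hF : ∀ i ∈ M, ‖F i‖ ≤ ‖G‖ + ε1 := fun i hi => by
    calc ‖F i‖ = ‖F i - G + G‖ := by rw [sub_add_cancel]
      _ ≤ ‖F i - G‖ + ‖G‖ := norm_add_le _ _
      _ ≤ ‖G‖ + ε1 := by linarith [h1 i hi]
  have hQF : ∀ j ∈ M, ‖Q (F j)‖ ≤ (1 + s) * (‖G‖ + ε1) := fun j hj => by
    have h4 : ‖Q (F j)‖ ≤ ‖Q (F j) - F j‖ + ‖F j‖ := by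
      calc ‖Q (F j)‖ = ‖Q (F j) - F j + F j‖ := by rw [sub_add_cancel]
        _ ≤ _ := norm_add_le _ _
    have h5 := hQ (F j)
    have h6 := hF j hj
    have h7 : ‖F j‖ ≥ 0 := norm_nonneg _
    nlinarith
  have hBUb : ∀ i ∈ B ∩ U, ‖r i - G‖ ≤ (1 + s) * (‖G‖ + ε1) + ‖G‖ := fun i hi => by
    have h4 : ‖r i‖ ≤ (1 + s) * (‖G‖ + ε1) :=
      le_trans (h3 i hi) (Finset.sup'_le hMne _ hQF)
    calc ‖r i - G‖ ≤ ‖r i‖ + ‖G‖ := norm_sub_le _ _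
      _ ≤ _ := by linarith
  have hMUb : ∀ i ∈ M ∩ U, ‖Q (F i) - F i‖ ≤ s * (‖G‖ + ε1) := fun i hi => by
    have hiM : i ∈ M := Finset.inter_subset_left hi
    have := hQ (F i)
    have := hF i hiM
    nlinarith
  have hMTb : ∀ i ∈ M ∩ T, ‖F i - G‖ ≤ ε1 := fun i hi =>
    h1 i (Finset.inter_subset_left hi)
  -- mean bound rescaled
  have hMmean : ‖(∑ i ∈ M, F i) - (M.card : ℝ) • G‖ ≤ (M.card : ℝ) * ε2 := by
    have h4 : (∑ i ∈ M, F i) - (M.card : ℝ) • G =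
        (M.card : ℝ) • ((1 / (M.card : ℝ)) • ∑ i ∈ M, F i - G) := by
      rw [smul_sub, smul_smul]
      rw [mul_one_div, div_self hMpos.ne', one_smul]
    rw [h4, norm_smul, Real.norm_eq_abs, abs_of_pos hMpos]
    exact mul_le_mul_of_nonneg_left h2 hMpos.le
  -- key vector identity
  have hE : (∑ i ∈ U, r i) - (U.card : ℝ) • G =
      (∑ i ∈ M ∩ U, (Q (F i) - F i)) + ((∑ i ∈ M, F i) - (M.card : ℝ) • G)
        - (∑ i ∈ M ∩ T, (F i - G)) + (∑ i ∈ B ∩ U, (r i - G)) := by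
    have h4 : ∑ i ∈ U, r i = (∑ i ∈ M ∩ U, Q (F i)) + ∑ i ∈ B ∩ U, r i := by
      conv_lhs => rw [← hUsplit]
      rw [Finset.sum_union hdisjU]
      congr 1
      exact Finset.sum_congr rfl fun i hi => hr i (Finset.inter_subset_left hi)
    have h5 : ∑ i ∈ M, F i = (∑ i ∈ M ∩ U, F i) + ∑ i ∈ M ∩ T, F i := by
      conv_lhs => rw [← hMsplit]
      rw [Finset.sum_union hdisjM]
    rw [h4, h5, Finset.sum_sub_distrib, Finset.sum_sub_distrib, Finset.sum_sub_distrib,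
      Finset.sum_const, Finset.sum_const, ← Nat.cast_smul_eq_nsmul ℝ,
      ← Nat.cast_smul_eq_nsmul ℝ, hcU, hcM]
    module
  -- norm bound on the aggregate deviation
  have hnorm : ‖(∑ i ∈ U, r i) - (U.card : ℝ) • G‖ ≤
      ((M ∩ U).card : ℝ) * (s * (‖G‖ + ε1)) + (M.card : ℝ) * ε2
        + ((M ∩ T).card : ℝ) * ε1
        + ((B ∩ U).card : ℝ) * ((1 + s) * (‖G‖ + ε1) + ‖G‖) := by
    rw [hE]
    have b1 := sum_norm_le_card_mul (M ∩ U) _ _ hMUb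
    have b3 := sum_norm_le_card_mul (M ∩ T) _ _ hMTb
    have b4 := sum_norm_le_card_mul (B ∩ U) _ _ hBUb
    calc ‖_ + _ - _ + _‖ ≤ ‖(∑ i ∈ M ∩ U, (Q (F i) - F i)) + ((∑ i ∈ M, F i) - (M.card : ℝ) • G)
          - (∑ i ∈ M ∩ T, (F i - G))‖ + ‖∑ i ∈ B ∩ U, (r i - G)‖ := norm_add_le _ _
      _ ≤ ‖(∑ i ∈ M ∩ U, (Q (F i) - F i)) + ((∑ i ∈ M, F i) - (M.card : ℝ) • G)‖
          + ‖∑ i ∈ M ∩ T, (F i - G)‖ + ‖∑ i ∈ B ∩ U, (r i - G)‖ := by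
            gcongr
            exact norm_sub_le _ _
      _ ≤ ‖∑ i ∈ M ∩ U, (Q (F i) - F i)‖ + ‖(∑ i ∈ M, F i) - (M.card : ℝ) • G‖
          + ‖∑ i ∈ M ∩ T, (F i - G)‖ + ‖∑ i ∈ B ∩ U, (r i - G)‖ := by
            gcongr
            exact norm_add_le _ _
      _ ≤ _ := by
            exact add_le_add (add_le_add (add_le_add b1 hMmean) b3) b4
  -- final arithmetic
  have hLHS : (1 / (U.card : ℝ)) • ∑ i ∈ U, r i - G =
      (1 / (U.card : ℝ)) • ((∑ i ∈ U, r i) - (U.card : ℝ) • G) := by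
    rw [smul_sub, smul_smul, one_div_mul_cancel hUpos.ne', one_smul]
  rw [hLHS, norm_smul, Real.norm_eq_abs, abs_of_pos (one_div_pos.mpr hUpos)]
  have hkey : (1 / (U.card : ℝ)) * (((M ∩ U).card : ℝ) * (s * (‖G‖ + ε1)) + (M.card : ℝ) * ε2
        + ((M ∩ T).card : ℝ) * ε1
        + ((B ∩ U).card : ℝ) * ((1 + s) * (‖G‖ + ε1) + ‖G‖)) ≤
      (((1 + β) * s + 2 * α) / (1 - β)) * ‖G‖ +
        (((1 + β) * s + α + β) / (1 - β)) * ε1 +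
        ((1 - α) / (1 - β)) * ε2 := by
    have hg : (0:ℝ) ≤ ‖G‖ := norm_nonneg _
    have hMU : ((M ∩ U).card : ℝ) = (1 - β) * m - ((B ∩ U).card : ℝ) := by
      rw [← hUcard, hcU]; ring
    have hBU0 : (0:ℝ) ≤ ((B ∩ U).card : ℝ) := Nat.cast_nonneg _
    have hMT0 : (0:ℝ) ≤ ((M ∩ T).card : ℝ) := Nat.cast_nonneg _
    have cancel : ∀ x : ℝ, x / (1 - β) * ((1 - β) * m) = x * m := fun x => by
      rw [div_mul_eq_mul_div, show x * ((1 - β) * (m:ℝ)) = x * (m:ℝ) * (1 - β) from by ring,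
        mul_div_assoc, div_self h1β.ne', mul_one]
    have hRHSeq : (((1 + β) * s + 2 * α) / (1 - β)) * ‖G‖ +
        (((1 + β) * s + α + β) / (1 - β)) * ε1 + ((1 - α) / (1 - β)) * ε2 =
        (((1 + β) * s + 2 * α) * ‖G‖ + ((1 + β) * s + α + β) * ε1 + (1 - α) * ε2) / (1 - β) := by
      ring
    rw [hUcard, one_div_mul_eq_div, div_le_iff₀ (mul_pos h1β hm'), hRHSeq, cancel, hMU, hMcard]
    nlinarith [mul_nonneg (mul_nonneg (mul_nonneg hm'.le hβ0) hs0) hg,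
      mul_nonneg (mul_nonneg (mul_nonneg hm'.le hβ0) hs0) hε1,
      mul_nonneg (sub_nonneg.mpr hBUle) hg,
      mul_nonneg (sub_nonneg.mpr hBUle) hε1,
      mul_nonneg (sub_nonneg.mpr hMTle) hε1,
      mul_nonneg h1β.le hm'.le]
  calc (1 / (U.card : ℝ)) * ‖(∑ i ∈ U, r i) - (U.card : ℝ) • G‖ ≤
      (1 / (U.card : ℝ)) * (((M ∩ U).card : ℝ) * (s * (‖G‖ + ε1)) + (M.card : ℝ) * ε2
        + ((M ∩ T).card : ℝ) * ε1
        + ((B ∩ U).card : ℝ) * ((1 + s) * (‖G‖ + ε1) + ‖G‖)) :=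
          mul_le_mul_of_nonneg_left hnorm (one_div_pos.mpr hUpos).le
    _ ≤ _ := hkey
end

section
/- Bound on the bias term T-tilde in error-feedback Byzantine aggregation: Let M, B partition [m] with |B|=alpha m, U, T partition [m] with |T|=beta m, alpha <= beta < 1/2. For i in M, let p_i = gamma g_i + e_i with ||g_i - G|| <= eps1, ||e_i||^2 <= (3(1-delta)/delta) gamma^2 sigma^2, and Q a delta-approximate compressor. Suppose norms ||Q(p_i)|| of untrimmed machines are bounded by max_{j in M} ||Q(p_j)||. Define T1 = (1/|U|) sum_{i in B cap U} Q(p_i), T2 = (1/|U|) sum_{i in M cap T} Q(p_i), T3 = ((beta - alpha)/(1-beta)) (1/|M|) sum_{i in M} Q(p_i), and T-tilde = T1 - T2 + T3. Then ||T-tilde||^2 <= (9 (1+sqrt(1-delta))^2 gamma^2 / (1-beta)^2) [alpha^2 + beta^2 + (beta - alpha)^2] (eps1^2 + ||G||^2 + (3(1-delta)/delta) sigma^2). -/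
open Finset

set_option maxHeartbeats 1000000

private lemma three_sq_aux (x y z : ℝ) : (x + y + z) ^ 2 ≤ 3 * (x ^ 2 + y ^ 2 + z ^ 2) := by
  nlinarith [sq_nonneg (x - y), sq_nonneg (x - z), sq_nonneg (y - z)]

/-- Bound on the bias term T-tilde in error-feedback Byzantine aggregation (Lemma 4). -/
theorem stmt_14 (d m : ℕ) (hm : 0 < m) (α β δ γ σ ε1 : ℝ)
    (hα : 0 ≤ α) (hαβ : α ≤ β) (hβ : β < 1 / 2) (hδ : δ ∈ Set.Ioc (0 : ℝ) 1)
    (hγ : 0 < γ) (hσ : 0 ≤ σ) (hε1 : 0 ≤ ε1)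
    (M B U T : Finset (Fin m))
    (hMB : Disjoint M B) (hMBu : M ∪ B = Finset.univ)
    (hUT : Disjoint U T) (hUTu : U ∪ T = Finset.univ)
    (hBcard : (B.card : ℝ) = α * m) (hTcard : (T.card : ℝ) = β * m)
    (hMne : M.Nonempty) (hUne : U.Nonempty)
    (Q : EuclideanSpace ℝ (Fin d) → EuclideanSpace ℝ (Fin d))
    (hQ : ∀ x, ‖Q x‖ ≤ (1 + Real.sqrt (1 - δ)) * ‖x‖)
    (g e p r : Fin m → EuclideanSpace ℝ (Fin d)) (G : EuclideanSpace ℝ (Fin d))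
    (hp : ∀ i ∈ M, p i = γ • g i + e i)
    (hg : ∀ i ∈ M, ‖g i - G‖ ≤ ε1)
    (he : ∀ i ∈ M, ‖e i‖ ^ 2 ≤ (3 * (1 - δ) / δ) * γ ^ 2 * σ ^ 2)
    (hr : ∀ i ∈ M, r i = Q (p i))
    (hnorm : ∀ i ∈ U, ‖r i‖ ≤ M.sup' hMne fun j => ‖Q (p j)‖)
    (T1 T2 T3 Ttilde : EuclideanSpace ℝ (Fin d))
    (hT1 : T1 = (1 / (U.card : ℝ)) • ∑ i ∈ B ∩ U, r i)
    (hT2 : T2 = (1 / (U.card : ℝ)) • ∑ i ∈ M ∩ T, Q (p i))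
    (hT3 : T3 = ((β - α) / (1 - β)) • (1 / (M.card : ℝ)) • ∑ i ∈ M, Q (p i))
    (hTtilde : Ttilde = T1 - T2 + T3) :
    ‖Ttilde‖ ^ 2 ≤
      (9 * (1 + Real.sqrt (1 - δ)) ^ 2 * γ ^ 2 / (1 - β) ^ 2) *
        (α ^ 2 + β ^ 2 + (β - α) ^ 2) *
        (ε1 ^ 2 + ‖G‖ ^ 2 + (3 * (1 - δ) / δ) * σ ^ 2) := by
  obtain ⟨hδ0, hδ1⟩ := hδ
  obtain ⟨c, hc⟩ : ∃ c : ℝ, c = 1 + Real.sqrt (1 - δ) := ⟨_, rfl⟩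
  simp only [← hc] at hQ ⊢
  have hc0 : (0 : ℝ) ≤ c := by rw [hc]; positivity
  obtain ⟨a, ha⟩ : ∃ a : ℝ, a = 3 * (1 - δ) / δ := ⟨_, rfl⟩
  simp only [← ha] at he ⊢
  have ha0 : (0 : ℝ) ≤ a := by
    rw [ha]; apply div_nonneg _ hδ0.le; nlinarith
  obtain ⟨K, hKdef⟩ : ∃ K : ℝ, K = γ * ε1 + γ * ‖G‖ + Real.sqrt a * γ * σ := ⟨_, rfl⟩
  have hK0 : 0 ≤ K := by rw [hKdef]; positivity
  have hs : (0 : ℝ) < 1 - β := by linarith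
  -- bound on each ‖Q (p i)‖ for i ∈ M
  have hQK : ∀ i ∈ M, ‖Q (p i)‖ ≤ c * K := by
    intro i hi
    have hei : ‖e i‖ ≤ Real.sqrt a * γ * σ := by
      have hsq : Real.sqrt a ^ 2 = a := Real.sq_sqrt ha0
      have h1 : ‖e i‖ ^ 2 ≤ (Real.sqrt a * γ * σ) ^ 2 := by
        rw [mul_pow, mul_pow, hsq]; exact he i hi
      have h2 := Real.sqrt_le_sqrt h1
      rwa [Real.sqrt_sq (norm_nonneg _), Real.sqrt_sq (by positivity)] at h2
    have hpi : p i = γ • (g i - G) + γ • G + e i := by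
      rw [hp i hi, smul_sub]; abel
    have hnp : ‖p i‖ ≤ K := by
      rw [hpi]
      calc ‖γ • (g i - G) + γ • G + e i‖
          ≤ ‖γ • (g i - G)‖ + ‖γ • G‖ + ‖e i‖ := by
            exact (norm_add_le _ _).trans (by gcongr; exact norm_add_le _ _)
        _ ≤ K := by
            rw [norm_smul, norm_smul, Real.norm_eq_abs, abs_of_pos hγ]
            have := hg i hi
            have : γ * ‖g i - G‖ ≤ γ * ε1 := by nlinarith
            rw [hKdef]
            linarith
    calc ‖Q (p i)‖ ≤ c * ‖p i‖ := hQ (p i)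
      _ ≤ c * K := by nlinarith
  have hsup : (M.sup' hMne fun j => ‖Q (p j)‖) ≤ c * K := Finset.sup'_le _ _ hQK
  have hrU : ∀ i ∈ U, ‖r i‖ ≤ c * K := fun i hi => (hnorm i hi).trans hsup
  -- cardinalities
  have hUT' : (U.card : ℝ) + T.card = m := by
    have := Finset.card_union_of_disjoint hUT
    rw [hUTu] at this
    simp [Finset.card_univ] at this
    exact_mod_cast this.symm
  have hUcard : (U.card : ℝ) = (1 - β) * m := by
    rw [hTcard] at hUT'; linarith
  have hm0 : (0 : ℝ) < m := by exact_mod_cast hm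
  have hUpos : (0 : ℝ) < U.card := by rw [hUcard]; positivity
  have hMpos : (0 : ℝ) < M.card := by exact_mod_cast Finset.card_pos.mpr hMne
  have hBU : ((B ∩ U).card : ℝ) ≤ α * m := by
    rw [← hBcard]
    exact_mod_cast Finset.card_le_card (Finset.inter_subset_left)
  have hMT : ((M ∩ T).card : ℝ) ≤ β * m := by
    rw [← hTcard]
    exact_mod_cast Finset.card_le_card (Finset.inter_subset_right)
  have hcK0 : 0 ≤ c * K := mul_nonneg hc0 hK0
  -- bound T1
  have hn1 : ‖T1‖ ≤ α / (1 - β) * (c * K) := by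
    rw [hT1, norm_smul, Real.norm_eq_abs, abs_of_pos (by positivity : (0:ℝ) < 1 / (U.card : ℝ))]
    have hsum : ‖∑ i ∈ B ∩ U, r i‖ ≤ ((B ∩ U).card : ℝ) * (c * K) := by
      calc ‖∑ i ∈ B ∩ U, r i‖ ≤ ∑ i ∈ B ∩ U, ‖r i‖ := norm_sum_le _ _
        _ ≤ ((B ∩ U).card : ℝ) * (c * K) := by
            rw [← nsmul_eq_mul]
            exact Finset.sum_le_card_nsmul _ _ _
              (fun i hi => hrU i (Finset.inter_subset_right hi))
    calc 1 / (U.card : ℝ) * ‖∑ i ∈ B ∩ U, r i‖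
        ≤ 1 / (U.card : ℝ) * (((B ∩ U).card : ℝ) * (c * K)) := by
          apply mul_le_mul_of_nonneg_left hsum (by positivity)
      _ ≤ 1 / (U.card : ℝ) * ((α * m) * (c * K)) := by
          apply mul_le_mul_of_nonneg_left _ (by positivity)
          exact mul_le_mul_of_nonneg_right hBU hcK0
      _ = α / (1 - β) * (c * K) := by
          rw [hUcard]; field_simp
  have hn2 : ‖T2‖ ≤ β / (1 - β) * (c * K) := by
    rw [hT2, norm_smul, Real.norm_eq_abs, abs_of_pos (by positivity : (0:ℝ) < 1 / (U.card : ℝ))]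
    have hsum : ‖∑ i ∈ M ∩ T, Q (p i)‖ ≤ ((M ∩ T).card : ℝ) * (c * K) := by
      calc ‖∑ i ∈ M ∩ T, Q (p i)‖ ≤ ∑ i ∈ M ∩ T, ‖Q (p i)‖ := norm_sum_le _ _
        _ ≤ ((M ∩ T).card : ℝ) * (c * K) := by
            rw [← nsmul_eq_mul]
            exact Finset.sum_le_card_nsmul _ _ _
              (fun i hi => hQK i (Finset.inter_subset_left hi))
    calc 1 / (U.card : ℝ) * ‖∑ i ∈ M ∩ T, Q (p i)‖
        ≤ 1 / (U.card : ℝ) * (((M ∩ T).card : ℝ) * (c * K)) := by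
          apply mul_le_mul_of_nonneg_left hsum (by positivity)
      _ ≤ 1 / (U.card : ℝ) * ((β * m) * (c * K)) := by
          apply mul_le_mul_of_nonneg_left _ (by positivity)
          exact mul_le_mul_of_nonneg_right hMT hcK0
      _ = β / (1 - β) * (c * K) := by
          rw [hUcard]; field_simp
  have hba : (0:ℝ) ≤ (β - α) / (1 - β) := div_nonneg (by linarith) hs.le
  have hn3 : ‖T3‖ ≤ (β - α) / (1 - β) * (c * K) := by
    rw [hT3, norm_smul, norm_smul, Real.norm_eq_abs, Real.norm_eq_abs,
      abs_of_nonneg hba,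
      abs_of_pos (by positivity : (0:ℝ) < 1 / (M.card : ℝ))]
    have hsum : ‖∑ i ∈ M, Q (p i)‖ ≤ ((M.card : ℝ)) * (c * K) := by
      calc ‖∑ i ∈ M, Q (p i)‖ ≤ ∑ i ∈ M, ‖Q (p i)‖ := norm_sum_le _ _
        _ ≤ (M.card : ℝ) * (c * K) := by
            rw [← nsmul_eq_mul]
            exact Finset.sum_le_card_nsmul _ _ _ hQK
    have h1 : 1 / (M.card : ℝ) * ‖∑ i ∈ M, Q (p i)‖ ≤ c * K := by
      calc 1 / (M.card : ℝ) * ‖∑ i ∈ M, Q (p i)‖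
          ≤ 1 / (M.card : ℝ) * ((M.card : ℝ) * (c * K)) := by
            apply mul_le_mul_of_nonneg_left hsum (by positivity)
        _ = c * K := by field_simp
    calc (β - α) / (1 - β) * (1 / (M.card : ℝ) * ‖∑ i ∈ M, Q (p i)‖)
        ≤ (β - α) / (1 - β) * (c * K) := by
          apply mul_le_mul_of_nonneg_left h1 hba
      _ = (β - α) / (1 - β) * (c * K) := rfl
  -- combine
  have htri : ‖Ttilde‖ ≤ ‖T1‖ + ‖T2‖ + ‖T3‖ := by
    rw [hTtilde]
    exact (norm_add_le _ _).trans (by gcongr; exact norm_sub_le _ _)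
  have hsq3 : ‖Ttilde‖ ^ 2 ≤ 3 * (‖T1‖ ^ 2 + ‖T2‖ ^ 2 + ‖T3‖ ^ 2) := by
    nlinarith [norm_nonneg Ttilde, norm_nonneg T1, norm_nonneg T2, norm_nonneg T3,
      sq_nonneg (‖T1‖ - ‖T2‖), sq_nonneg (‖T1‖ - ‖T3‖), sq_nonneg (‖T2‖ - ‖T3‖)]
  have hsq1 : ‖T1‖ ^ 2 ≤ (α / (1 - β)) ^ 2 * (c * K) ^ 2 := by
    rw [← mul_pow]
    exact pow_le_pow_left₀ (norm_nonneg _) hn1 2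
  have hsq2 : ‖T2‖ ^ 2 ≤ (β / (1 - β)) ^ 2 * (c * K) ^ 2 := by
    rw [← mul_pow]
    exact pow_le_pow_left₀ (norm_nonneg _) hn2 2
  have hsq3' : ‖T3‖ ^ 2 ≤ ((β - α) / (1 - β)) ^ 2 * (c * K) ^ 2 := by
    rw [← mul_pow]
    exact pow_le_pow_left₀ (norm_nonneg _) hn3 2
  have hK2 : K ^ 2 ≤ 3 * γ ^ 2 * (ε1 ^ 2 + ‖G‖ ^ 2 + a * σ ^ 2) := by
    have hsqa : Real.sqrt a ^ 2 = a := Real.sq_sqrt ha0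
    have hz : (Real.sqrt a * γ * σ) ^ 2 = a * γ ^ 2 * σ ^ 2 := by
      rw [mul_pow, mul_pow, hsqa]
    calc K ^ 2 ≤ 3 * ((γ * ε1) ^ 2 + (γ * ‖G‖) ^ 2 + (Real.sqrt a * γ * σ) ^ 2) := by
          rw [hKdef]; exact three_sq_aux _ _ _
      _ = 3 * γ ^ 2 * (ε1 ^ 2 + ‖G‖ ^ 2 + a * σ ^ 2) := by rw [hz]; ring
  have hB0 : (0:ℝ) ≤ (α / (1 - β)) ^ 2 + (β / (1 - β)) ^ 2 + ((β - α) / (1 - β)) ^ 2 := by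
    positivity
  have hmain : ‖Ttilde‖ ^ 2 ≤
      3 * ((α / (1 - β)) ^ 2 + (β / (1 - β)) ^ 2 + ((β - α) / (1 - β)) ^ 2) *
        (c ^ 2 * (3 * γ ^ 2 * (ε1 ^ 2 + ‖G‖ ^ 2 + a * σ ^ 2))) := by
    have h1 : ‖Ttilde‖ ^ 2 ≤
        3 * ((α / (1 - β)) ^ 2 + (β / (1 - β)) ^ 2 + ((β - α) / (1 - β)) ^ 2) * (c * K) ^ 2 := by
      have := hsq3
      linarith [hsq1, hsq2, hsq3', hsq3,
        mul_le_mul_of_nonneg_left hsq1 (by norm_num : (0:ℝ) ≤ 3)]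
    have h2 : (c * K) ^ 2 ≤ c ^ 2 * (3 * γ ^ 2 * (ε1 ^ 2 + ‖G‖ ^ 2 + a * σ ^ 2)) := by
      rw [mul_pow]
      exact mul_le_mul_of_nonneg_left hK2 (sq_nonneg c)
    calc ‖Ttilde‖ ^ 2 ≤ _ := h1
      _ ≤ _ := by
        apply mul_le_mul_of_nonneg_left h2
        positivity
  calc ‖Ttilde‖ ^ 2 ≤ _ := hmain
    _ = (9 * c ^ 2 * γ ^ 2 / (1 - β) ^ 2) * (α ^ 2 + β ^ 2 + (β - α) ^ 2) *
        (ε1 ^ 2 + ‖G‖ ^ 2 + a * σ ^ 2) := by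
      field_simp
      ring
end
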